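/- arXiv:q-alg/9511011 — 5 statements merged into one kernel-verified Lean document; each statement's English description precedes it below -/
import Mathlib

section
/- The map sending the irreducible osp(1|2)-module V_m^ε (of dimension 2m+1) to the class [V_m] + [V_{m−1}] in the Grothendieck ring of finite-dimensional sl₂-modules (with V_{−1} = 0) induces a surjective ring homomorphism from the Grothendieck ring of finite-dimensional osp(1|2)-representations onto the Grothendieck ring of finite-dimensional sl₂-representations. -/
/-- Product of basis classes in the Grothendieck ring of finite-dimensional
`sl₂`-modules (Clebsch–Gordan): `[V r][V s] = Σ_{j=|r-s|, step 2}^{r+s} [V j]`. -/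
noncomputable def slMulB (r s : ℕ) : ℕ →₀ ℤ :=
  ∑ j ∈ Finset.Icc ((r - s) ⊔ (s - r)) (r + s),
    if (r + s + j) % 2 = 0 then Finsupp.single j 1 else 0

/-- Product of basis classes in the Grothendieck ring of finite-dimensional
`osp(1|2)`-modules: `[V r₁ ^ α][V r₂ ^ β] = Σ_{j=|r₁-r₂|}^{r₁+r₂}
[V j ^ (α+β+r₁+r₂-j)]` (parity alternating at each step). -/
noncomputable def ospMulB (a b : ℕ × ZMod 2) : (ℕ × ZMod 2) →₀ ℤ :=
  ∑ j ∈ Finset.Icc ((a.1 - b.1) ⊔ (b.1 - a.1)) (a.1 + b.1),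
    Finsupp.single (j, a.2 + b.2 + ((a.1 + b.1 - j : ℕ) : ZMod 2)) 1

/-- Bilinear extension of a product on basis elements to the free ℤ-module. -/
noncomputable def liftMul {α : Type} (B : α → α → (α →₀ ℤ)) (x y : α →₀ ℤ) : α →₀ ℤ :=
  x.sum fun a m => y.sum fun b n => (m * n) • B a b

/-- The ℤ-linear map sending the class of the irreducible `osp(1|2)`-module
`V m ^ ε` (dimension `2m+1`) to `[V m] + [V (m-1)]` (with `V (-1) = 0`) in the
Grothendieck ring of `sl₂`. -/
noncomputable def phi : ((ℕ × ZMod 2) →₀ ℤ) →ₗ[ℤ] (ℕ →₀ ℤ) :=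
  Finsupp.lsum ℤ fun a => LinearMap.toSpanSingleton ℤ (ℕ →₀ ℤ)
    (Finsupp.single a.1 1 + if a.1 = 0 then 0 else Finsupp.single (a.1 - 1) 1)

lemma phi_single (a : ℕ × ZMod 2) (m : ℤ) :
    phi (Finsupp.single a m)
      = m • (Finsupp.single a.1 1 + if a.1 = 0 then 0 else Finsupp.single (a.1 - 1) 1) := by
  simp [phi, LinearMap.toSpanSingleton_apply]

lemma liftMul_single_single {α : Type} (B : α → α → (α →₀ ℤ)) (a b : α) (m n : ℤ) :
    liftMul B (Finsupp.single a m) (Finsupp.single b n) = (m * n) • B a b := by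
  unfold liftMul
  rw [Finsupp.sum_single_index, Finsupp.sum_single_index] <;> simp

lemma liftMul_zero_left {α : Type} (B : α → α → (α →₀ ℤ)) (y : (α →₀ ℤ)) :
    liftMul B 0 y = 0 := by simp [liftMul]

lemma liftMul_zero_right {α : Type} (B : α → α → (α →₀ ℤ)) (x : (α →₀ ℤ)) :
    liftMul B x 0 = 0 := by simp [liftMul]

lemma liftMul_add_left {α : Type} (B : α → α → (α →₀ ℤ)) (x x' y : (α →₀ ℤ)) :
    liftMul B (x + x') y = liftMul B x y + liftMul B x' y := by
  classical
  unfold liftMul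
  rw [Finsupp.sum_add_index]
  · intro a _; simp
  · intro a _ m m'
    rw [← Finsupp.sum_add]
    apply Finsupp.sum_congr
    intro b _; rw [add_mul, add_smul]

lemma liftMul_add_right {α : Type} (B : α → α → (α →₀ ℤ)) (x y y' : (α →₀ ℤ)) :
    liftMul B x (y + y') = liftMul B x y + liftMul B x y' := by
  classical
  unfold liftMul
  rw [← Finsupp.sum_add]
  apply Finsupp.sum_congr
  intro a _
  rw [Finsupp.sum_add_index]
  · intro b _; simp
  · intro b _ n n'; rw [mul_add, add_smul]

lemma liftMul_smul_left {α : Type} (B : α → α → (α →₀ ℤ)) (c : ℤ) (x y : (α →₀ ℤ)) :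
    liftMul B (c • x) y = c • liftMul B x y := by
  unfold liftMul
  rw [Finsupp.sum_smul_index', Finsupp.smul_sum]
  · apply Finsupp.sum_congr
    intro a _
    rw [Finsupp.smul_sum]
    apply Finsupp.sum_congr
    intro b _
    rw [smul_eq_mul, mul_assoc, mul_smul]
  · intro a; simp

lemma liftMul_smul_right {α : Type} (B : α → α → (α →₀ ℤ)) (c : ℤ) (x y : (α →₀ ℤ)) :
    liftMul B x (c • y) = c • liftMul B x y := by
  unfold liftMul
  rw [Finsupp.smul_sum]
  apply Finsupp.sum_congr
  intro a _
  rw [Finsupp.sum_smul_index', Finsupp.smul_sum]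
  · apply Finsupp.sum_congr
    intro b _
    simp only [smul_eq_mul, smul_smul]
    ring_nf
  · intro b; simp

lemma slMulB_apply (r s t : ℕ) :
    slMulB r s t
      = if ((r - s) ⊔ (s - r) ≤ t ∧ t ≤ r + s ∧ (r + s + t) % 2 = 0) then 1 else 0 := by
  classical
  rw [slMulB, Finset.sum_apply']
  rw [Finset.sum_congr rfl
    (g := fun j => if j = t then (if (r + s + t) % 2 = 0 then (1:ℤ) else 0) else 0) ?_]
  · rw [Finset.sum_ite_eq']
    simp only [Finset.mem_Icc]
    split_ifs <;> first | rfl | omega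
  · intro j _
    by_cases h : j = t
    · subst h
      simp [Finsupp.single_apply, apply_ite (fun f : ℕ →₀ ℤ => f j)]
    · simp [Finsupp.single_apply, apply_ite (fun f : ℕ →₀ ℤ => f t), h]

lemma phi_osp_apply (m n : ℕ) (ε δ : ZMod 2) (t : ℕ) :
    phi (ospMulB (m, ε) (n, δ)) t
      = (if (m - n) ⊔ (n - m) ≤ t ∧ t ≤ m + n then 1 else 0)
        + (if (m - n) ⊔ (n - m) ≤ t + 1 ∧ t + 1 ≤ m + n then 1 else 0) := by
  classical
  rw [ospMulB, map_sum, Finset.sum_apply']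
  rw [Finset.sum_congr rfl
    (g := fun j => (if j = t then (1:ℤ) else 0) + (if j = t + 1 then 1 else 0)) ?_]
  · rw [Finset.sum_add_distrib, Finset.sum_ite_eq', Finset.sum_ite_eq']
    simp only [Finset.mem_Icc]
  · intro j _
    rw [phi_single, one_smul, Finsupp.add_apply, Finsupp.single_apply]
    congr 1
    by_cases h0 : j = 0
    · subst h0
      rw [if_pos rfl, if_neg (by omega)]
      rfl
    · rw [if_neg h0, Finsupp.single_apply]
      split_ifs <;> omega

lemma slMulB_apply' (r s t : ℕ) :
    slMulB r s t
      = if (r ≤ s + t ∧ s ≤ r + t ∧ t ≤ r + s ∧ (r + s + t) % 2 = 0) then 1 else 0 := by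
  rw [slMulB_apply]
  split_ifs <;> omega

lemma phi_osp_apply' (m n : ℕ) (ε δ : ZMod 2) (t : ℕ) :
    phi (ospMulB (m, ε) (n, δ)) t
      = (if m ≤ n + t ∧ n ≤ m + t ∧ t ≤ m + n then 1 else 0)
        + (if m ≤ n + t + 1 ∧ n ≤ m + t + 1 ∧ t + 1 ≤ m + n then 1 else 0) := by
  rw [phi_osp_apply]
  congr 1 <;> (split_ifs <;> omega)

lemma core (m n : ℕ) (ε δ : ZMod 2) :
    phi (ospMulB (m, ε) (n, δ))
      = liftMul slMulB (phi (Finsupp.single (m, ε) 1)) (phi (Finsupp.single (n, δ) 1)) := by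
  rw [phi_single, phi_single, one_smul, one_smul]
  by_cases hm : m = 0 <;> by_cases hn : n = 0
  · subst hm; subst hn
    simp only [eq_self_iff_true, if_true, add_zero]
    rw [liftMul_single_single, one_mul, one_smul]
    ext t
    rw [phi_osp_apply', slMulB_apply']
    split_ifs <;> omega
  · subst hm
    obtain ⟨n', rfl⟩ : ∃ n', n = n' + 1 := ⟨n - 1, by omega⟩
    simp only [eq_self_iff_true, if_true, add_zero, if_neg hn, Nat.add_sub_cancel]
    simp only [liftMul_add_left, liftMul_add_right, liftMul_single_single, one_mul, one_smul]
    ext t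
    rw [phi_osp_apply']
    simp only [Finsupp.add_apply, slMulB_apply']
    split_ifs <;> omega
  · subst hn
    obtain ⟨m', rfl⟩ : ∃ m', m = m' + 1 := ⟨m - 1, by omega⟩
    simp only [eq_self_iff_true, if_true, add_zero, if_neg hm, Nat.add_sub_cancel]
    simp only [liftMul_add_left, liftMul_add_right, liftMul_single_single, one_mul, one_smul]
    ext t
    rw [phi_osp_apply']
    simp only [Finsupp.add_apply, slMulB_apply']
    split_ifs <;> omega
  · obtain ⟨m', rfl⟩ : ∃ m', m = m' + 1 := ⟨m - 1, by omega⟩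
    obtain ⟨n', rfl⟩ : ∃ n', n = n' + 1 := ⟨n - 1, by omega⟩
    simp only [if_neg hm, if_neg hn, Nat.add_sub_cancel]
    simp only [liftMul_add_left, liftMul_add_right, liftMul_single_single, one_mul, one_smul]
    ext t
    rw [phi_osp_apply']
    simp only [Finsupp.add_apply, slMulB_apply']
    split_ifs <;> omega

lemma phi_mul (x y : (ℕ × ZMod 2) →₀ ℤ) :
    phi (liftMul ospMulB x y) = liftMul slMulB (phi x) (phi y) := by
  induction x using Finsupp.induction_linear with
  | zero => simp [liftMul_zero_left]
  | add f g hf hg => rw [liftMul_add_left, map_add, hf, hg, map_add, liftMul_add_left]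
  | single a m =>
    induction y using Finsupp.induction_linear with
    | zero => simp [liftMul_zero_right]
    | add f g hf hg => rw [liftMul_add_right, map_add, hf, hg, map_add, liftMul_add_right]
    | single b n =>
      have h1 : (Finsupp.single a m : (ℕ × ZMod 2) →₀ ℤ) = m • Finsupp.single a 1 := by
        rw [Finsupp.smul_single, smul_eq_mul, mul_one]
      have h2 : (Finsupp.single b n : (ℕ × ZMod 2) →₀ ℤ) = n • Finsupp.single b 1 := by
        rw [Finsupp.smul_single, smul_eq_mul, mul_one]
      rw [h1, h2, liftMul_smul_left, liftMul_smul_right, map_smul, map_smul, map_smul, map_smul,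
        liftMul_smul_left, liftMul_smul_right, liftMul_single_single, one_mul, one_smul]
      obtain ⟨r, ε⟩ := a
      obtain ⟨s, δ⟩ := b
      rw [core]

lemma phi_surj : Function.Surjective phi := by
  have key : ∀ t : ℕ, ∃ z, phi z = Finsupp.single t 1 := by
    intro t
    induction t with
    | zero =>
      exact ⟨Finsupp.single (0, 0) 1, by rw [phi_single]; simp⟩
    | succ k ih =>
      obtain ⟨z, hz⟩ := ih
      refine ⟨Finsupp.single (k + 1, 0) 1 - z, ?_⟩
      rw [map_sub, hz, phi_single]
      simp
  intro y
  induction y using Finsupp.induction_linear with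
  | zero => exact ⟨0, map_zero phi⟩
  | add f g hf hg =>
    obtain ⟨z, hz⟩ := hf
    obtain ⟨w, hw⟩ := hg
    exact ⟨z + w, by rw [map_add, hz, hw]⟩
  | single a m =>
    obtain ⟨z, hz⟩ := key a
    refine ⟨m • z, ?_⟩
    rw [map_smul, hz, Finsupp.smul_single, smul_eq_mul, mul_one]


/-- **The map `V_m^ε ↦ [V_m] + [V_{m-1}]` induces a surjective ring homomorphism
from the Grothendieck ring of `osp(1|2)` onto the Grothendieck ring of `sl₂`:**
it is ℤ-linear (by construction), surjective, unital, and multiplicative. -/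
theorem stmt5 :
    Function.Surjective phi ∧
    phi (Finsupp.single (0, (0 : ZMod 2)) 1) = Finsupp.single 0 1 ∧
    ∀ x y : (ℕ × ZMod 2) →₀ ℤ,
      phi (liftMul ospMulB x y) = liftMul slMulB (phi x) (phi y) := by
  refine ⟨phi_surj, ?_, phi_mul⟩
  rw [phi_single]
  simp
end

section
/- The fusion algebra for generalized Weyl modules over affine sl₂ at generic level, with product (V_{r₁}^α, V_{s₁}) ∘ (V_{r₂}^β, V_{s₂}) = Σ_{j=|r₁−r₂|}^{r₁+r₂} (V_j^{α+β+r₁+r₂−j}, V_{s₁} ⊗ V_{s₂}), is isomorphic as a ring to the tensor product of the Grothendieck ring of finite-dimensional osp(1|2)-modules with the Grothendieck ring of finite-dimensional sl₂-modules. -/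
open TensorProduct

/-- Product of basis symbols `(V r ^ ε, V s)` in the generic-level fusion
algebra of generalized Weyl modules over affine `sl₂`:
`(V_{r₁}^α, V_{s₁}) ∘ (V_{r₂}^β, V_{s₂}) =
  Σ_{j=|r₁-r₂|}^{r₁+r₂} (V_j^{α+β+r₁+r₂-j}, V_{s₁} ⊗ V_{s₂})`. -/
noncomputable def fusMulB (a b : (ℕ × ZMod 2) × ℕ) : ((ℕ × ZMod 2) × ℕ) →₀ ℤ :=
  ∑ j ∈ Finset.Icc ((a.1.1 - b.1.1) ⊔ (b.1.1 - a.1.1)) (a.1.1 + b.1.1),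
    ∑ l ∈ Finset.Icc ((a.2 - b.2) ⊔ (b.2 - a.2)) (a.2 + b.2),
      if (a.2 + b.2 + l) % 2 = 0 then
        Finsupp.single ((j, a.1.2 + b.1.2 + ((a.1.1 + b.1.1 - j : ℕ) : ZMod 2)), l) 1
      else 0

/-- Bilinear (curried) form of a basis product. -/
noncomputable def liftMulL {α : Type} (B : α → α → (α →₀ ℤ)) :
    (α →₀ ℤ) →ₗ[ℤ] (α →₀ ℤ) →ₗ[ℤ] (α →₀ ℤ) :=
  Finsupp.lsum ℤ fun a => LinearMap.toSpanSingleton ℤ ((α →₀ ℤ) →ₗ[ℤ] (α →₀ ℤ))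
    (Finsupp.lsum ℤ fun b => LinearMap.toSpanSingleton ℤ (α →₀ ℤ) (B a b))

/-- The induced multiplication on the tensor product of the two Grothendieck
rings: `(x₁ ⊗ y₁) · (x₂ ⊗ y₂) = (x₁x₂) ⊗ (y₁y₂)`. -/
noncomputable def mulT :
    (((ℕ × ZMod 2) →₀ ℤ) ⊗[ℤ] (ℕ →₀ ℤ)) →ₗ[ℤ]
      (((ℕ × ZMod 2) →₀ ℤ) ⊗[ℤ] (ℕ →₀ ℤ)) →ₗ[ℤ]
      (((ℕ × ZMod 2) →₀ ℤ) ⊗[ℤ] (ℕ →₀ ℤ)) :=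
  TensorProduct.lift
    (((TensorProduct.mapBilinear (RingHom.id ℤ) ((ℕ × ZMod 2) →₀ ℤ) (ℕ →₀ ℤ)
          ((ℕ × ZMod 2) →₀ ℤ) (ℕ →₀ ℤ)).comp
        (liftMulL ospMulB)).compl₂ (liftMulL slMulB))

/-!
The fusion product of basis symbols is literally the product of the `osp(1|2)` product of the
first components with the Clebsch–Gordan product of the second ones. Hence the canonical
isomorphism `ℤ[A × B] ≃ ℤ[A] ⊗ ℤ[B]` of free modules is multiplicative on basis elements, and
therefore everywhere, since both products are bilinear.
-/

section BilinearExtension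

variable {α : Type} (B : α → α → (α →₀ ℤ))

theorem liftMul_eq_liftMulL (x y : α →₀ ℤ) : liftMul B x y = liftMulL B x y := by
  rw [liftMul, liftMulL, Finsupp.lsum_apply, LinearMap.finsupp_sum_apply]
  refine Finsupp.sum_congr fun a _ => ?_
  rw [LinearMap.toSpanSingleton_apply, LinearMap.smul_apply, Finsupp.lsum_apply,
    Finsupp.smul_sum]
  refine Finsupp.sum_congr fun b _ => ?_
  rw [LinearMap.toSpanSingleton_apply, smul_smul]

@[simp]
theorem liftMulL_single_one (a b : α) :
    liftMulL B (Finsupp.single a 1) (Finsupp.single b 1) = B a b := by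
  simp [liftMulL]

theorem map_liftMulL_of_single {M : Type*} [AddCommGroup M] (f : (α →₀ ℤ) →ₗ[ℤ] M)
    (μ : M →ₗ[ℤ] M →ₗ[ℤ] M)
    (h : ∀ a b, f (B a b) = μ (f (Finsupp.single a 1)) (f (Finsupp.single b 1)))
    (x y : α →₀ ℤ) : f (liftMulL B x y) = μ (f x) (f y) := by
  suffices (liftMulL B).compr₂ f = μ.compl₁₂ f f from LinearMap.congr_fun₂ this x y
  ext a b
  simpa using h a b

end BilinearExtension

theorem finsuppTensorFinsupp'_symm_single_one {R A B : Type*} [CommSemiring R] (a : A × B) :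
    (finsuppTensorFinsupp' R A B).symm (Finsupp.single a 1) =
      Finsupp.single a.1 1 ⊗ₜ[R] Finsupp.single a.2 1 := by
  simpa using finsuppTensorFinsupp'_symm_single_mul R A B a 1 1

theorem mulT_single_tmul_single (p r : ℕ × ZMod 2) (q s : ℕ) :
    mulT (Finsupp.single p 1 ⊗ₜ[ℤ] Finsupp.single q 1)
        (Finsupp.single r 1 ⊗ₜ[ℤ] Finsupp.single s 1)
      = ospMulB p r ⊗ₜ[ℤ] slMulB q s := by
  rw [mulT]
  erw [TensorProduct.lift.tmul]
  simp

theorem fusMulB_eq_finsuppTensorFinsupp' (a b : (ℕ × ZMod 2) × ℕ) :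
    fusMulB a b = finsuppTensorFinsupp' ℤ (ℕ × ZMod 2) ℕ
      (ospMulB a.1 b.1 ⊗ₜ[ℤ] slMulB a.2 b.2) := by
  rw [ospMulB, slMulB, TensorProduct.sum_tmul, map_sum, fusMulB]
  refine Finset.sum_congr rfl fun j _ => ?_
  rw [TensorProduct.tmul_sum, map_sum]
  refine Finset.sum_congr rfl fun l _ => ?_
  split_ifs
  · rw [finsuppTensorFinsupp'_single_tmul_single, mul_one]
  · rw [TensorProduct.tmul_zero, map_zero]

/-- **The generic-level fusion algebra of generalized Weyl modules over affine
`sl₂` is isomorphic, as a ring, to the tensor product of the Grothendieck ring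
of finite-dimensional `osp(1|2)`-modules with the Grothendieck ring of
finite-dimensional `sl₂`-modules:** there is a ℤ-linear bijection which is
unital and multiplicative. -/
theorem stmt7 :
    ∃ f : (((ℕ × ZMod 2) × ℕ) →₀ ℤ) ≃ₗ[ℤ] ((ℕ × ZMod 2) →₀ ℤ) ⊗[ℤ] (ℕ →₀ ℤ),
      f (Finsupp.single ((0, (0 : ZMod 2)), 0) 1)
        = Finsupp.single (0, (0 : ZMod 2)) 1 ⊗ₜ[ℤ] Finsupp.single 0 1 ∧
      ∀ x y : ((ℕ × ZMod 2) × ℕ) →₀ ℤ,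
        f (liftMul fusMulB x y) = mulT (f x) (f y) := by
  let e := (finsuppTensorFinsupp' ℤ (ℕ × ZMod 2) ℕ).symm
  refine ⟨e, finsuppTensorFinsupp'_symm_single_one _, fun x y => ?_⟩
  rw [liftMul_eq_liftMulL]
  refine map_liftMulL_of_single fusMulB e.toLinearMap mulT (fun a b => ?_) x y
  change e (fusMulB a b) = mulT (e (Finsupp.single a 1)) (e (Finsupp.single b 1))
  rw [finsuppTensorFinsupp'_symm_single_one, finsuppTensorFinsupp'_symm_single_one,
    mulT_single_tmul_single, fusMulB_eq_finsuppTensorFinsupp', LinearEquiv.symm_apply_apply]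
end

section
/- For nonnegative integers r, s and a positive integer k with r, s ≤ k, the truncated (Kazhdan-Lusztig fusion) product V_r ⊗̇_k V_s = V_{|r−s|} ⊕ V_{|r−s|+2} ⊕ ⋯ ⊕ V_{min(2k−r−s, r+s)} defines a commutative associative ring structure on the free ℤ-module with basis [V₀], ..., [V_k], with unit [V₀]. -/
set_option maxHeartbeats 1000000

/-- Level-`k` truncated (Kazhdan–Lusztig / Verlinde) product of basis classes:
`V r ⊗̇ₖ V s = Σ_{j=|r-s|, step 2}^{min(2k-r-s, r+s)} V j`
on the free ℤ-module with basis `[V₀], …, [V_k]`. -/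
noncomputable def fusB (k : ℕ) (r s : Fin (k + 1)) : Fin (k + 1) →₀ ℤ :=
  ∑ j : Fin (k + 1),
    if ((r : ℕ) + s + j) % 2 = 0 ∧
        ((r : ℕ) - s) ⊔ ((s : ℕ) - r) ≤ (j : ℕ) ∧
        (j : ℕ) ≤ min (2 * k - r - s) ((r : ℕ) + s)
    then Finsupp.single j 1 else 0

/-- Bilinear extension of the truncated product. -/
noncomputable def fusMul (k : ℕ) (x y : Fin (k + 1) →₀ ℤ) : Fin (k + 1) →₀ ℤ :=
  x.sum fun a m => y.sum fun b n => (m * n) • fusB k a b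

lemma fusB_apply (k : ℕ) (r s d : Fin (k + 1)) :
    fusB k r s d = if ((r : ℕ) + s + d) % 2 = 0 ∧
        ((r : ℕ) - s) ⊔ ((s : ℕ) - r) ≤ (d : ℕ) ∧
        (d : ℕ) ≤ min (2 * k - r - s) ((r : ℕ) + s) then 1 else 0 := by
  classical
  rw [fusB, Finsupp.finset_sum_apply]
  rw [Finset.sum_eq_single d]
  · split_ifs with h <;> simp
  · intro j _ hj
    split_ifs with h
    · exact Finsupp.single_eq_of_ne' hj
    · rfl
  · simp

/-- Flat (subtraction/min/max-free) form of the fusion condition. -/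
lemma fusB_apply' (k : ℕ) (r s d : Fin (k + 1)) :
    fusB k r s d = if ((r : ℕ) + s + d) % 2 = 0 ∧
        (r : ℕ) ≤ (s : ℕ) + d ∧ (s : ℕ) ≤ (r : ℕ) + d ∧ (d : ℕ) ≤ (r : ℕ) + s ∧
        (r : ℕ) + s + d ≤ 2 * k then 1 else 0 := by
  rw [fusB_apply]
  have hr := r.isLt
  have hs := s.isLt
  have hd := d.isLt
  exact if_congr (by omega) rfl rfl

lemma fusB_comm (k : ℕ) (r s : Fin (k + 1)) : fusB k r s = fusB k s r := by
  classical
  rw [fusB, fusB]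
  apply Finset.sum_congr rfl
  intro j _
  exact if_congr (by omega) rfl rfl

lemma cnt (L U : ℕ) (n : ℕ) :
    (∑ j ∈ Finset.range n, if L ≤ j ∧ j ≤ U ∧ (j + L) % 2 = 0 then (1:ℤ) else 0)
      = ((min n (U+1) - L + 1) / 2 : ℕ) := by
  induction n with
  | zero => simp
  | succ n ih =>
    rw [Finset.sum_range_succ, ih]
    split_ifs with h <;> push_cast <;> omega

lemma cnt' (L U : ℕ) (n : ℕ) (h : U < n) :
    (∑ j ∈ Finset.range n, if L ≤ j ∧ j ≤ U ∧ (j + L) % 2 = 0 then (1:ℤ) else 0)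
      = ((U + 2 - L) / 2 : ℕ) := by
  rw [cnt]
  congr 1
  omega

lemma fusMul_left_basis (k : ℕ) (X : Fin (k+1) →₀ ℤ) (c : Fin (k+1)) :
    fusMul k X (Finsupp.single c 1) = ∑ j : Fin (k+1), X j • fusB k j c := by
  rw [fusMul, Finsupp.sum_fintype]
  · apply Finset.sum_congr rfl
    intro j _
    rw [Finsupp.sum_single_index (by simp)]
    rw [mul_one]
  · intro j
    simp

lemma fusMul_right_basis (k : ℕ) (Y : Fin (k+1) →₀ ℤ) (a : Fin (k+1)) :
    fusMul k (Finsupp.single a 1) Y = ∑ j : Fin (k+1), Y j • fusB k a j := by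
  rw [fusMul, Finsupp.sum_single_index (by simp)]
  rw [Finsupp.sum_fintype]
  · apply Finset.sum_congr rfl
    intro j _
    rw [one_mul]
  · intro j; simp

/-- The key arithmetic identity behind associativity. -/
lemma fus_count (k a b c d L1 U1 L2 U2 : ℕ)
    (ha : a ≤ k) (hb : b ≤ k) (hc : c ≤ k) (hd : d ≤ k)
    (hpar : (a + b + c + d) % 2 = 0)
    (hL1 : a ≤ b + L1 ∧ b ≤ a + L1 ∧ c ≤ d + L1 ∧ d ≤ c + L1 ∧
      (L1 + b = a ∨ L1 + a = b ∨ L1 + d = c ∨ L1 + c = d))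
    (hU1 : U1 ≤ a + b ∧ U1 + a + b ≤ 2*k ∧ U1 ≤ c + d ∧ U1 + c + d ≤ 2*k ∧
      (U1 = a + b ∨ U1 + a + b = 2*k ∨ U1 = c + d ∨ U1 + c + d = 2*k))
    (hL2 : b ≤ c + L2 ∧ c ≤ b + L2 ∧ a ≤ d + L2 ∧ d ≤ a + L2 ∧
      (L2 + c = b ∨ L2 + b = c ∨ L2 + d = a ∨ L2 + a = d))
    (hU2 : U2 ≤ b + c ∧ U2 + b + c ≤ 2*k ∧ U2 ≤ a + d ∧ U2 + a + d ≤ 2*k ∧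
      (U2 = b + c ∨ U2 + b + c = 2*k ∨ U2 = a + d ∨ U2 + a + d = 2*k)) :
    (U1 + 2 - L1) / 2 = (U2 + 2 - L2) / 2 := by
  omega

lemma fus_key (k : ℕ) (a b c : Fin (k+1)) :
    fusMul k (fusB k a b) (Finsupp.single c 1)
      = fusMul k (Finsupp.single a 1) (fusB k b c) := by
  classical
  rw [fusMul_left_basis, fusMul_right_basis]
  ext d
  rw [Finsupp.finset_sum_apply, Finsupp.finset_sum_apply]
  have ha := Nat.lt_succ_iff.mp a.isLt
  have hb := Nat.lt_succ_iff.mp b.isLt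
  have hc := Nat.lt_succ_iff.mp c.isLt
  have hd := Nat.lt_succ_iff.mp d.isLt
  simp only [Finsupp.smul_apply, fusB_apply', smul_eq_mul, ite_mul, mul_ite,
    one_mul, mul_one, zero_mul, mul_zero, ← ite_and]
  by_cases hpar : ((a:ℕ) + b + c + d) % 2 = 0
  · obtain ⟨L1, hL1⟩ : ∃ L1 : ℕ, (a:ℕ) ≤ b + L1 ∧ (b:ℕ) ≤ a + L1 ∧ (c:ℕ) ≤ d + L1 ∧
        (d:ℕ) ≤ c + L1 ∧ (L1 + b = a ∨ L1 + a = b ∨ L1 + d = c ∨ L1 + c = d) :=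
      ⟨(((a:ℕ)-b) ⊔ ((b:ℕ)-a)) ⊔ (((c:ℕ)-d) ⊔ ((d:ℕ)-c)), by omega⟩
    obtain ⟨U1, hU1⟩ : ∃ U1 : ℕ, U1 ≤ (a:ℕ) + b ∧ U1 + a + b ≤ 2*k ∧ U1 ≤ (c:ℕ) + d ∧
        U1 + c + d ≤ 2*k ∧ (U1 = (a:ℕ) + b ∨ U1 + a + b = 2*k ∨ U1 = (c:ℕ) + d ∨
        U1 + c + d = 2*k) :=
      ⟨(min (2*k - a - b) ((a:ℕ)+b)) ⊓ (min (2*k - c - d) ((c:ℕ)+d)), by omega⟩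
    obtain ⟨L2, hL2⟩ : ∃ L2 : ℕ, (b:ℕ) ≤ c + L2 ∧ (c:ℕ) ≤ b + L2 ∧ (a:ℕ) ≤ d + L2 ∧
        (d:ℕ) ≤ a + L2 ∧ (L2 + c = b ∨ L2 + b = c ∨ L2 + d = a ∨ L2 + a = d) :=
      ⟨(((b:ℕ)-c) ⊔ ((c:ℕ)-b)) ⊔ (((a:ℕ)-d) ⊔ ((d:ℕ)-a)), by omega⟩
    obtain ⟨U2, hU2⟩ : ∃ U2 : ℕ, U2 ≤ (b:ℕ) + c ∧ U2 + b + c ≤ 2*k ∧ U2 ≤ (a:ℕ) + d ∧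
        U2 + a + d ≤ 2*k ∧ (U2 = (b:ℕ) + c ∨ U2 + b + c = 2*k ∨ U2 = (a:ℕ) + d ∨
        U2 + a + d = 2*k) :=
      ⟨(min (2*k - b - c) ((b:ℕ)+c)) ⊓ (min (2*k - a - d) ((a:ℕ)+d)), by omega⟩
    have e1 :
        (∑ j : Fin (k+1), if
          ((((j:ℕ) + c + d) % 2 = 0 ∧
            (j:ℕ) ≤ (c:ℕ) + d ∧ (c:ℕ) ≤ (j:ℕ) + d ∧ (d:ℕ) ≤ (j:ℕ) + c ∧
            (j:ℕ) + c + d ≤ 2 * k) ∧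
           (((a:ℕ) + b + j) % 2 = 0 ∧
            (a:ℕ) ≤ (b:ℕ) + j ∧ (b:ℕ) ≤ (a:ℕ) + j ∧ (j:ℕ) ≤ (a:ℕ) + b ∧
            (a:ℕ) + b + j ≤ 2 * k))
          then (1:ℤ) else 0)
        = ((U1 + 2 - L1) / 2 : ℕ) := by
      rw [Fin.sum_univ_eq_sum_range (fun j : ℕ => if
          (((j + (c:ℕ) + d) % 2 = 0 ∧
            j ≤ (c:ℕ) + d ∧ (c:ℕ) ≤ j + d ∧ (d:ℕ) ≤ j + c ∧
            j + c + d ≤ 2 * k) ∧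
           (((a:ℕ) + b + j) % 2 = 0 ∧
            (a:ℕ) ≤ (b:ℕ) + j ∧ (b:ℕ) ≤ (a:ℕ) + j ∧ j ≤ (a:ℕ) + b ∧
            (a:ℕ) + b + j ≤ 2 * k))
          then (1:ℤ) else 0) (k+1)]
      rw [← cnt' L1 U1 (k+1) (by omega)]
      apply Finset.sum_congr rfl
      intro j hj
      have hj' := Finset.mem_range.mp hj
      exact if_congr (by omega) rfl rfl
    have e2 :
        (∑ j : Fin (k+1), if
          ((((a:ℕ) + j + d) % 2 = 0 ∧
            (a:ℕ) ≤ (j:ℕ) + d ∧ (j:ℕ) ≤ (a:ℕ) + d ∧ (d:ℕ) ≤ (a:ℕ) + j ∧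
            (a:ℕ) + j + d ≤ 2 * k) ∧
           (((b:ℕ) + c + j) % 2 = 0 ∧
            (b:ℕ) ≤ (c:ℕ) + j ∧ (c:ℕ) ≤ (b:ℕ) + j ∧ (j:ℕ) ≤ (b:ℕ) + c ∧
            (b:ℕ) + c + j ≤ 2 * k))
          then (1:ℤ) else 0)
        = ((U2 + 2 - L2) / 2 : ℕ) := by
      rw [Fin.sum_univ_eq_sum_range (fun j : ℕ => if
          ((((a:ℕ) + j + d) % 2 = 0 ∧
            (a:ℕ) ≤ j + d ∧ j ≤ (a:ℕ) + d ∧ (d:ℕ) ≤ (a:ℕ) + j ∧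
            (a:ℕ) + j + d ≤ 2 * k) ∧
           (((b:ℕ) + c + j) % 2 = 0 ∧
            (b:ℕ) ≤ (c:ℕ) + j ∧ (c:ℕ) ≤ (b:ℕ) + j ∧ j ≤ (b:ℕ) + c ∧
            (b:ℕ) + c + j ≤ 2 * k))
          then (1:ℤ) else 0) (k+1)]
      rw [← cnt' L2 U2 (k+1) (by omega)]
      apply Finset.sum_congr rfl
      intro j hj
      have hj' := Finset.mem_range.mp hj
      exact if_congr (by omega) rfl rfl
    rw [e1, e2]
    congr 1
    exact fus_count k a b c d L1 U1 L2 U2 ha hb hc hd hpar hL1 hU1 hL2 hU2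
  · rw [Finset.sum_eq_zero, Finset.sum_eq_zero]
    · intro j _
      exact if_neg (by omega)
    · intro j _
      exact if_neg (by omega)

-- ## bookkeeping

lemma fusMul_zero_left (k : ℕ) (y : Fin (k+1) →₀ ℤ) : fusMul k 0 y = 0 := by
  simp [fusMul]

lemma fusMul_zero_right (k : ℕ) (x : Fin (k+1) →₀ ℤ) : fusMul k x 0 = 0 := by
  simp [fusMul]

lemma fusMul_add_left (k : ℕ) (x y z : Fin (k+1) →₀ ℤ) :
    fusMul k (x + y) z = fusMul k x z + fusMul k y z := by
  rw [fusMul, fusMul, fusMul]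
  apply Finsupp.sum_add_index'
  · intro a; simp
  · intro a m₁ m₂
    rw [← Finsupp.sum_add]
    apply Finsupp.sum_congr
    intro b _
    rw [add_mul, add_smul]

lemma fusMul_add_right (k : ℕ) (x y z : Fin (k+1) →₀ ℤ) :
    fusMul k x (y + z) = fusMul k x y + fusMul k x z := by
  rw [fusMul, fusMul, fusMul, ← Finsupp.sum_add]
  apply Finsupp.sum_congr
  intro a _
  apply Finsupp.sum_add_index'
  · intro b; simp
  · intro b n₁ n₂
    rw [mul_add, add_smul]

lemma fusMul_smul_left (k : ℕ) (t : ℤ) (x y : Fin (k+1) →₀ ℤ) :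
    fusMul k (t • x) y = t • fusMul k x y := by
  rw [fusMul, fusMul, Finsupp.sum_smul_index (by intro i; simp), Finsupp.smul_sum]
  apply Finsupp.sum_congr
  intro a _
  rw [Finsupp.smul_sum]
  apply Finsupp.sum_congr
  intro b _
  rw [smul_smul, mul_assoc]

lemma fusMul_smul_right (k : ℕ) (t : ℤ) (x y : Fin (k+1) →₀ ℤ) :
    fusMul k x (t • y) = t • fusMul k x y := by
  rw [fusMul, fusMul, Finsupp.smul_sum]
  apply Finsupp.sum_congr
  intro a _
  rw [Finsupp.sum_smul_index (by intro i; simp), Finsupp.smul_sum]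
  apply Finsupp.sum_congr
  intro b _
  rw [smul_smul]
  congr 1
  ring

lemma fusMul_single_single (k : ℕ) (a b : Fin (k+1)) (m n : ℤ) :
    fusMul k (Finsupp.single a m) (Finsupp.single b n) = (m * n) • fusB k a b := by
  rw [fusMul, Finsupp.sum_single_index (by simp), Finsupp.sum_single_index (by simp)]

lemma fusMul_comm (k : ℕ) (x y : Fin (k+1) →₀ ℤ) : fusMul k x y = fusMul k y x := by
  rw [fusMul, fusMul, Finsupp.sum_comm]
  apply Finsupp.sum_congr
  intro a _
  apply Finsupp.sum_congr
  intro b _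
  rw [mul_comm, fusB_comm]

lemma fusB_zero_left (k : ℕ) (b : Fin (k+1)) : fusB k 0 b = Finsupp.single b 1 := by
  classical
  have h0 : ((0 : Fin (k+1)) : ℕ) = 0 := rfl
  have hb := Nat.lt_succ_iff.mp b.isLt
  rw [fusB, Finset.sum_eq_single b]
  · rw [if_pos]
    refine ⟨by omega, by simp only [h0]; omega, by simp only [h0]; omega⟩
  · intro j _ hj
    have hj' : (j : ℕ) ≠ (b : ℕ) := fun h => hj (Fin.ext h)
    have hjk := Nat.lt_succ_iff.mp j.isLt
    rw [if_neg]
    simp only [h0]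
    omega
  · simp

lemma fusMul_one_left (k : ℕ) (x : Fin (k+1) →₀ ℤ) :
    fusMul k (Finsupp.single 0 1) x = x := by
  rw [fusMul_right_basis]
  have : ∀ j : Fin (k+1), x j • fusB k 0 j = Finsupp.single j (x j) := by
    intro j
    rw [fusB_zero_left, Finsupp.smul_single, smul_eq_mul, mul_one]
  rw [Finset.sum_congr rfl (fun j _ => this j)]
  exact Finsupp.univ_sum_single x

-- ## associativity from fus_key

lemma fus_assoc_sss (k : ℕ) (a b c : Fin (k+1)) (m n p : ℤ) :
    fusMul k (fusMul k (Finsupp.single a m) (Finsupp.single b n)) (Finsupp.single c p)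
      = fusMul k (Finsupp.single a m) (fusMul k (Finsupp.single b n) (Finsupp.single c p)) := by
  rw [fusMul_single_single, fusMul_single_single, fusMul_smul_left, fusMul_smul_right]
  have hc : (Finsupp.single c p : Fin (k+1) →₀ ℤ) = p • Finsupp.single c 1 := by
    rw [Finsupp.smul_single, smul_eq_mul, mul_one]
  have ha : (Finsupp.single a m : Fin (k+1) →₀ ℤ) = m • Finsupp.single a 1 := by
    rw [Finsupp.smul_single, smul_eq_mul, mul_one]
  rw [hc, ha, fusMul_smul_right, fusMul_smul_left, fus_key]
  simp only [smul_smul]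
  congr 1
  ring

lemma fus_assoc_ssz (k : ℕ) (a b : Fin (k+1)) (m n : ℤ) (z : Fin (k+1) →₀ ℤ) :
    fusMul k (fusMul k (Finsupp.single a m) (Finsupp.single b n)) z
      = fusMul k (Finsupp.single a m) (fusMul k (Finsupp.single b n) z) := by
  induction z using Finsupp.induction with
  | zero => simp only [fusMul_zero_left, fusMul_zero_right]
  | single_add c p f hcf hp ih =>
    rw [fusMul_add_right, fusMul_add_right, fusMul_add_right, ih, fus_assoc_sss]

lemma fus_assoc_sz (k : ℕ) (a : Fin (k+1)) (m : ℤ) (y z : Fin (k+1) →₀ ℤ) :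
    fusMul k (fusMul k (Finsupp.single a m) y) z
      = fusMul k (Finsupp.single a m) (fusMul k y z) := by
  induction y using Finsupp.induction with
  | zero => simp only [fusMul_zero_left, fusMul_zero_right]
  | single_add b n f hbf hn ih =>
    rw [fusMul_add_right, fusMul_add_left, fusMul_add_left, fusMul_add_right, ih, fus_assoc_ssz]

lemma fus_assoc (k : ℕ) (x y z : Fin (k+1) →₀ ℤ) :
    fusMul k (fusMul k x y) z = fusMul k x (fusMul k y z) := by
  induction x using Finsupp.induction with
  | zero => simp only [fusMul_zero_left, fusMul_zero_right]
  | single_add a m f haf hm ih =>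
    rw [fusMul_add_left, fusMul_add_left, fusMul_add_left, ih, fus_assoc_sz]

/-- **The level-`k` fusion (Verlinde) ring of `sl₂`:** the truncated tensor
product `V_r ⊗̇ₖ V_s = V_{|r-s|} ⊕ V_{|r-s|+2} ⊕ ⋯ ⊕ V_{min(2k-r-s, r+s)}`
makes the free ℤ-module on `[V₀], …, [V_k]` into a commutative associative
unital ring with unit `[V₀]`. -/
theorem stmt10 (k : ℕ) (hk : 0 < k) :
    (∀ x y : Fin (k + 1) →₀ ℤ, fusMul k x y = fusMul k y x) ∧
    (∀ x y z : Fin (k + 1) →₀ ℤ, fusMul k (fusMul k x y) z = fusMul k x (fusMul k y z)) ∧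
    (∀ x y z : Fin (k + 1) →₀ ℤ, fusMul k (x + y) z = fusMul k x z + fusMul k y z) ∧
    (∀ x y z : Fin (k + 1) →₀ ℤ, fusMul k x (y + z) = fusMul k x y + fusMul k x z) ∧
    (∀ x : Fin (k + 1) →₀ ℤ,
      fusMul k (Finsupp.single 0 1) x = x ∧ fusMul k x (Finsupp.single 0 1) = x) := by
  refine ⟨fusMul_comm k, fus_assoc k, fun x y z => fusMul_add_left k x y z,
    fun x y z => fusMul_add_right k x y z, fun x =>
    ⟨fusMul_one_left k x, ?_⟩⟩
  rw [fusMul_comm]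
  exact fusMul_one_left k x
end

section
/- In the quantized enveloping algebra U_t(sl₂) with t a primitive l-th root of unity, l odd, the (m+1)-dimensional highest weight module V_m (deformation of the classical irreducible) is irreducible if and only if m < l. -/
/-- The quantum integer `[n]_t = (tⁿ - t⁻ⁿ)/(t - t⁻¹)`. -/
noncomputable def qint (t : ℂ) (n : ℤ) : ℂ := (t ^ n - t ^ (-n)) / (t - t⁻¹)

/-- Matrix of `K` on the `(m+1)`-dimensional module `V_m`: `K vᵢ = t^{m-2i} vᵢ`. -/
noncomputable def Kmat (t : ℂ) (m : ℕ) : Matrix (Fin (m + 1)) (Fin (m + 1)) ℂ :=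
  Matrix.diagonal fun i => t ^ ((m : ℤ) - 2 * (i : ℕ))

/-- Matrix of `F`: `F vᵢ = vᵢ₊₁` (and `F v_m = 0`). -/
noncomputable def Fmat (m : ℕ) : Matrix (Fin (m + 1)) (Fin (m + 1)) ℂ :=
  fun i j => if (i : ℕ) = (j : ℕ) + 1 then 1 else 0

/-- Matrix of `E`: `E vᵢ = [i]_t [m-i+1]_t vᵢ₋₁` (and `E v₀ = 0`). -/
noncomputable def Emat (t : ℂ) (m : ℕ) : Matrix (Fin (m + 1)) (Fin (m + 1)) ℂ :=
  fun i j => if (j : ℕ) = (i : ℕ) + 1 then qint t ((i : ℕ) + 1) * qint t ((m : ℤ) - (i : ℕ)) else 0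

section helpers
variable {l : ℕ} {t : ℂ} (hl : Odd l) (hl1 : 1 < l) (ht : IsPrimitiveRoot t l)
include hl hl1 ht

omit hl in
lemma tne : t ≠ 0 := ht.ne_zero (by omega)

lemma denom_ne : t - t⁻¹ ≠ 0 := by
  intro h
  have ht0 : t ≠ 0 := tne hl1 ht
  have h2 : t ^ (2 : ℕ) = 1 := by
    have : t * t = 1 := by
      have := sub_eq_zero.mp h
      field_simp at this
      linear_combination this
    rw [pow_two]; exact this
  have hdvd := ht.dvd_of_pow_eq_one 2 h2
  have := Nat.le_of_dvd (by norm_num) hdvd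
  interval_cases l
  · exact (by decide : ¬ Odd 2) hl

omit hl1 in
lemma ldvd_of_zpow {n : ℤ} (h2 : t ^ (2 * n) = 1) : (l : ℤ) ∣ n := by
  rw [ht.zpow_eq_one_iff_dvd] at h2
  have hcop : IsCoprime (l : ℤ) 2 := by
    rw [Int.isCoprime_iff_gcd_eq_one]
    simpa [Int.gcd] using Nat.coprime_two_right.mpr hl
  exact hcop.dvd_of_dvd_mul_left h2

lemma qint_ne_zero {n : ℤ} (h : ¬ ((l : ℤ) ∣ n)) : qint t n ≠ 0 := by
  have ht0 : t ≠ 0 := tne hl1 ht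
  have hd := denom_ne hl hl1 ht
  rw [qint, div_ne_zero_iff]
  refine ⟨fun hnum => h (ldvd_of_zpow hl ht ?_), hd⟩
  have hsub := sub_eq_zero.mp hnum
  rw [two_mul, zpow_add₀ ht0]
  nth_rewrite 1 [hsub]
  rw [← zpow_add₀ ht0, neg_add_cancel, zpow_zero]

omit hl hl1 in
lemma qint_l_zero : qint t (l : ℤ) = 0 := by
  have h1 : t ^ (l : ℤ) = 1 := by rw [ht.zpow_eq_one_iff_dvd]
  have h2 : t ^ (-(l : ℤ)) = 1 := by rw [ht.zpow_eq_one_iff_dvd]; exact dvd_neg.mpr dvd_rfl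
  rw [qint, h1, h2, sub_self, zero_div]

end helpers

lemma single_mem_of_diag {n : ℕ} (d : Fin n → ℂ) (hd : Function.Injective d)
    (p : Submodule ℂ (Fin n → ℂ))
    (hp : ∀ v ∈ p, (fun k => d k * v k) ∈ p) :
    ∀ N : ℕ, ∀ v ∈ p, (Finset.univ.filter fun k => v k ≠ 0).card ≤ N →
      ∀ i, Pi.single i (v i) ∈ p := by
  intro N
  induction N with
  | zero =>
    intro v hv hcard i
    have hvi : v i = 0 := by
      by_contra h
      have hmem : i ∈ Finset.univ.filter fun k => v k ≠ 0 := by simp [h]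
      have := Finset.card_pos.mpr ⟨i, hmem⟩
      omega
    rw [hvi, Pi.single_zero]
    exact p.zero_mem
  | succ N ih =>
    intro v hv hcard i
    by_cases h0 : ∀ k, v k = 0
    · rw [h0 i, Pi.single_zero]; exact p.zero_mem
    push_neg at h0
    obtain ⟨i₀, hi₀⟩ := h0
    set w : Fin n → ℂ := (fun k => d k * v k) - d i₀ • v with hwdef
    have hwp : w ∈ p := p.sub_mem (hp v hv) (p.smul_mem (d i₀) hv)
    have hwk : ∀ k, w k = (d k - d i₀) * v k := by
      intro k; simp [hwdef]; ring
    have hcard' : (Finset.univ.filter fun k => w k ≠ 0).card ≤ N := by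
      have hsub : (Finset.univ.filter fun k => w k ≠ 0) ⊆
          (Finset.univ.filter fun k => v k ≠ 0).erase i₀ := by
        intro k hk
        simp only [Finset.mem_filter, Finset.mem_erase, Finset.mem_univ, true_and] at hk ⊢
        have h1 : v k ≠ 0 := by
          intro h; apply hk; rw [hwk k, h, mul_zero]
        refine ⟨?_, h1⟩
        intro h; apply hk; rw [h, hwk, sub_self, zero_mul]
      have := Finset.card_le_card hsub
      have hi₀mem : i₀ ∈ Finset.univ.filter fun k => v k ≠ 0 := by simp [hi₀]
      have := Finset.card_erase_of_mem hi₀mem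
      omega
    have hwsingle := ih w hwp hcard'
    have hne : ∀ k, k ≠ i₀ → Pi.single k (v k) ∈ p := by
      intro k hk
      have hdk : d k - d i₀ ≠ 0 := sub_ne_zero.mpr (fun h => hk (hd h))
      have : Pi.single k (v k) = (d k - d i₀)⁻¹ • (Pi.single k (w k) : Fin n → ℂ) := by
        funext r
        rw [Pi.smul_apply, smul_eq_mul]
        rcases eq_or_ne r k with h | h
        · subst h
          rw [Pi.single_eq_same, Pi.single_eq_same, hwk, inv_mul_cancel_left₀ hdk]
        · rw [Pi.single_eq_of_ne h, Pi.single_eq_of_ne h, mul_zero]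
      rw [this]
      exact p.smul_mem _ (hwsingle k)
    have hzero : Pi.single i₀ (v i₀) ∈ p := by
      have hsum : Pi.single i₀ (v i₀) =
          v - ∑ k ∈ Finset.univ.erase i₀, Pi.single k (v k) := by
        rw [eq_sub_iff_add_eq, add_comm]
        exact (Finset.sum_erase_add _ _ (Finset.mem_univ i₀)).trans (Finset.univ_sum_single v)
      rw [hsum]
      exact p.sub_mem hv (Submodule.sum_mem p fun k hk =>
        hne k (Finset.ne_of_mem_erase hk))
    by_cases hii : i = i₀
    · rw [hii]; exact hzero
    · exact hne i hii

/-- **Irreducibility criterion for `V_m` over `U_t(sl₂)` at a primitive `l`-th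
root of unity, `l` odd:** the `(m+1)`-dimensional highest weight module `V_m`
(on which `E`, `F`, `K` act by the matrices above) is irreducible — i.e. has no
invariant subspaces other than `⊥` and `⊤` — if and only if `m < l`. -/
theorem stmt11 (l m : ℕ) (t : ℂ) (hl : Odd l) (hl1 : 1 < l)
    (ht : IsPrimitiveRoot t l) :
    (∀ p : Submodule ℂ (Fin (m + 1) → ℂ),
        p.map (Emat t m).mulVecLin ≤ p →
        p.map (Fmat m).mulVecLin ≤ p →
        p.map (Kmat t m).mulVecLin ≤ p →
        p = ⊥ ∨ p = ⊤) ↔ m < l := by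
  have ht0 : t ≠ 0 := tne hl1 ht
  constructor
  · -- irreducible → m < l
    intro hirr
    by_contra hml
    push_neg at hml  -- l ≤ m
    set p : Submodule ℂ (Fin (m + 1) → ℂ) :=
      { carrier := {v | ∀ i : Fin (m + 1), (i : ℕ) < l → v i = 0}
        add_mem' := fun ha hb i hi => by
          simp only [Set.mem_setOf_eq] at *
          rw [Pi.add_apply, ha i hi, hb i hi, add_zero]
        zero_mem' := fun i _ => rfl
        smul_mem' := fun c a ha i hi => by
          simp only [Set.mem_setOf_eq] at *
          rw [Pi.smul_apply, ha i hi, smul_zero] } with hpdef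
    have hmem : ∀ v : Fin (m + 1) → ℂ,
        v ∈ p ↔ ∀ i : Fin (m + 1), (i : ℕ) < l → v i = 0 := fun v => Iff.rfl
    have hE : p.map (Emat t m).mulVecLin ≤ p := by
      rintro x hx
      obtain ⟨v, hv, rfl⟩ := hx
      replace hv : ∀ i : Fin (m + 1), (i : ℕ) < l → v i = 0 := hv
      rw [hmem]
      intro i hi
      rw [Matrix.mulVecLin_apply]
      show ∑ j, Emat t m i j * v j = 0
      apply Finset.sum_eq_zero
      intro j _
      simp only [Emat]
      split_ifs with h
      · by_cases h2 : (i : ℕ) + 1 < l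
        · rw [hv j (by omega), mul_zero]
        · have hil : ((i : ℕ) : ℤ) + 1 = (l : ℤ) := by omega
          rw [hil, qint_l_zero ht, zero_mul, zero_mul]
      · exact zero_mul _
    have hF : p.map (Fmat m).mulVecLin ≤ p := by
      rintro x hx
      obtain ⟨v, hv, rfl⟩ := hx
      replace hv : ∀ i : Fin (m + 1), (i : ℕ) < l → v i = 0 := hv
      rw [hmem]
      intro i hi
      rw [Matrix.mulVecLin_apply]
      show ∑ j, Fmat m i j * v j = 0
      apply Finset.sum_eq_zero
      intro j _
      simp only [Fmat]
      split_ifs with h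
      · rw [hv j (by omega), mul_zero]
      · exact zero_mul _
    have hK : p.map (Kmat t m).mulVecLin ≤ p := by
      rintro x hx
      obtain ⟨v, hv, rfl⟩ := hx
      replace hv : ∀ i : Fin (m + 1), (i : ℕ) < l → v i = 0 := hv
      rw [hmem]
      intro i hi
      rw [Matrix.mulVecLin_apply, Kmat, Matrix.mulVec_diagonal, hv i hi, mul_zero]
    have hll : l < m + 1 := by omega
    have hsl : Pi.single (⟨l, hll⟩ : Fin (m + 1)) (1 : ℂ) ∈ p := by
      rw [hmem]
      intro i hi
      exact Pi.single_eq_of_ne (fun h => by simp [Fin.ext_iff] at h; omega) 1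
    rcases hirr p hE hF hK with hbot | htop
    · rw [hbot, Submodule.mem_bot] at hsl
      have := congrFun hsl ⟨l, hll⟩
      rw [Pi.single_eq_same] at this
      exact one_ne_zero this
    · have h0 : (Pi.single (0 : Fin (m + 1)) (1 : ℂ)) ∈ p := htop ▸ Submodule.mem_top
      rw [hmem] at h0
      have := h0 0 (by simp; omega)
      rw [Pi.single_eq_same] at this
      exact one_ne_zero this
  · -- m < l → irreducible
    intro hml p hE hF hK
    rcases eq_or_ne p ⊥ with hbot | hne
    · exact Or.inl hbot
    right
    obtain ⟨v, hv, hv0⟩ := Submodule.ne_bot_iff p |>.mp hne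
    obtain ⟨i₀, hi₀⟩ := Function.ne_iff.mp hv0
    -- eigenvalues of K are distinct
    set d : Fin (m + 1) → ℂ := fun i => t ^ ((m : ℤ) - 2 * (i : ℕ)) with hddef
    have hd : Function.Injective d := by
      intro i j hij
      simp only [hddef] at hij
      have h2 : t ^ (2 * (((j : ℕ) : ℤ) - ((i : ℕ) : ℤ))) = 1 := by
        rw [show 2 * (((j : ℕ) : ℤ) - ((i : ℕ) : ℤ)) =
            ((m : ℤ) - 2 * (i : ℕ)) + (-((m : ℤ) - 2 * (j : ℕ))) by ring,
          zpow_add₀ ht0, hij, ← zpow_add₀ ht0, add_neg_cancel, zpow_zero]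
      have hdvd := ldvd_of_zpow hl ht h2
      obtain ⟨c, hc⟩ := hdvd
      have hi := i.isLt
      have hj := j.isLt
      apply Fin.ext
      rcases lt_trichotomy c 0 with h | h | h
      · nlinarith [hc, Int.ofNat_lt.mpr hi, Int.ofNat_lt.mpr hj]
      · rw [h, mul_zero] at hc; omega
      · nlinarith [hc, Int.ofNat_lt.mpr hi, Int.ofNat_lt.mpr hj]
    have hp : ∀ u ∈ p, (fun k => d k * u k) ∈ p := by
      intro u hu
      have := hK (Submodule.mem_map_of_mem (f := (Kmat t m).mulVecLin) hu)
      have heq : (Kmat t m).mulVecLin u = fun k => d k * u k := by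
        funext k
        rw [Matrix.mulVecLin_apply, Kmat, Matrix.mulVec_diagonal]
      rwa [heq] at this
    have hsingle := single_mem_of_diag d hd p hp (m + 1) v hv
      (le_trans (Finset.card_le_univ _) (by simp)) i₀
    have hs1 : Pi.single i₀ (1 : ℂ) ∈ p := by
      have heq : Pi.single i₀ (1 : ℂ) = (v i₀)⁻¹ • (Pi.single i₀ (v i₀) : Fin (m + 1) → ℂ) := by
        funext r
        rw [Pi.smul_apply, smul_eq_mul]
        rcases eq_or_ne r i₀ with h | h
        · subst h; rw [Pi.single_eq_same, Pi.single_eq_same, inv_mul_cancel₀ hi₀]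
        · rw [Pi.single_eq_of_ne h, Pi.single_eq_of_ne h, mul_zero]
      rw [heq]
      exact p.smul_mem _ hsingle
    -- nonzero coefficients
    have hc : ∀ k : ℕ, k < m → qint t (((k : ℕ) : ℤ) + 1) * qint t ((m : ℤ) - ((k : ℕ) : ℤ)) ≠ 0 := by
      intro k hk
      apply mul_ne_zero
      · apply qint_ne_zero hl hl1 ht
        intro hdvd
        have := Int.le_of_dvd (by positivity) hdvd
        omega
      · apply qint_ne_zero hl hl1 ht
        intro hdvd
        have := Int.le_of_dvd (by omega) hdvd
        omega
    -- step down via E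
    have hdown : ∀ (k : ℕ) (hk : k + 1 < m + 1),
        Pi.single (⟨k + 1, hk⟩ : Fin (m + 1)) (1 : ℂ) ∈ p →
        Pi.single (⟨k, by omega⟩ : Fin (m + 1)) (1 : ℂ) ∈ p := by
      intro k hk hmem
      have h1 := hE (Submodule.mem_map_of_mem (f := (Emat t m).mulVecLin) hmem)
      have heq : (Emat t m).mulVecLin (Pi.single (⟨k + 1, hk⟩ : Fin (m + 1)) (1 : ℂ)) =
          (qint t (((k : ℕ) : ℤ) + 1) * qint t ((m : ℤ) - ((k : ℕ) : ℤ))) •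
            (Pi.single (⟨k, by omega⟩ : Fin (m + 1)) (1 : ℂ) : Fin (m + 1) → ℂ) := by
        rw [Matrix.mulVecLin_apply, Matrix.mulVec_single_one]
        funext r
        simp only [Matrix.col_apply, Emat, mul_one, Pi.smul_apply, smul_eq_mul]
        rcases eq_or_ne r (⟨k, by omega⟩ : Fin (m + 1)) with h | h
        · subst h
          rw [Pi.single_eq_same, mul_one, if_pos (by simp)]
        · rw [if_neg (fun hh => h (Fin.ext (by simp at hh ⊢; omega))),
            Pi.single_eq_of_ne h, mul_zero]
      rw [heq] at h1
      have h2 := p.smul_mem (qint t (((k : ℕ) : ℤ) + 1) * qint t ((m : ℤ) - ((k : ℕ) : ℤ)))⁻¹ h1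
      rwa [smul_smul, inv_mul_cancel₀ (hc k (by omega)), one_smul] at h2
    -- step up via F
    have hup : ∀ (k : ℕ) (hk : k + 1 < m + 1),
        Pi.single (⟨k, by omega⟩ : Fin (m + 1)) (1 : ℂ) ∈ p →
        Pi.single (⟨k + 1, hk⟩ : Fin (m + 1)) (1 : ℂ) ∈ p := by
      intro k hk hmem
      have h1 := hF (Submodule.mem_map_of_mem (f := (Fmat m).mulVecLin) hmem)
      have heq : (Fmat m).mulVecLin (Pi.single (⟨k, by omega⟩ : Fin (m + 1)) (1 : ℂ)) =
          Pi.single (⟨k + 1, hk⟩ : Fin (m + 1)) (1 : ℂ) := by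
        rw [Matrix.mulVecLin_apply, Matrix.mulVec_single_one]
        funext r
        simp only [Matrix.col_apply, Fmat, mul_one]
        rcases eq_or_ne r (⟨k + 1, hk⟩ : Fin (m + 1)) with h | h
        · subst h
          rw [Pi.single_eq_same, if_pos (by simp)]
        · rw [if_neg (fun hh => h (Fin.ext (by simp at hh ⊢; omega))),
            Pi.single_eq_of_ne h]
      rwa [heq] at h1
    -- go down to zero
    have hzero : ∀ (k : ℕ) (hk : k < m + 1),
        Pi.single (⟨k, hk⟩ : Fin (m + 1)) (1 : ℂ) ∈ p →
        Pi.single (⟨0, by omega⟩ : Fin (m + 1)) (1 : ℂ) ∈ p := by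
      intro k
      induction k with
      | zero => exact fun hk h => h
      | succ k ih => exact fun hk h => ih (by omega) (hdown k hk h)
    -- all singles
    have hall : ∀ (k : ℕ) (hk : k < m + 1),
        Pi.single (⟨k, hk⟩ : Fin (m + 1)) (1 : ℂ) ∈ p := by
      intro k
      induction k with
      | zero =>
        intro hk
        have := hzero (i₀ : ℕ) i₀.isLt (by rwa [Fin.eta])
        exact this
      | succ k ih =>
        intro hk
        exact hup k hk (ih (by omega))
    rw [Submodule.eq_top_iff']
    intro w
    rw [← Finset.univ_sum_single w]
    apply Submodule.sum_mem
    intro j _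
    have heq : Pi.single j (w j) = (w j) • (Pi.single j (1 : ℂ) : Fin (m + 1) → ℂ) := by
      funext r
      rw [Pi.smul_apply, smul_eq_mul]
      rcases eq_or_ne r j with h | h
      · subst h; rw [Pi.single_eq_same, Pi.single_eq_same, mul_one]
      · rw [Pi.single_eq_of_ne h, Pi.single_eq_of_ne h, mul_zero]
    rw [heq]
    exact p.smul_mem _ (by have := hall (j : ℕ) j.isLt; rwa [Fin.eta] at this)
end

section
/- Let p, q be coprime positive integers with p ≥ 2 and set N(r₁,r₂) = min(2q−2−r₁−r₂, r₁+r₂). The rational-level fusion product (V_{r₁}^α, V_{s₁})~ ∘ (V_{r₂}^β, V_{s₂})~ = Σ_{j=|r₁−r₂|}^{N(r₁,r₂)} (V_j^{α+β+r₁+r₂−j}, V_{s₁} ⊗̇_{p−2} V_{s₂})~ is well defined on equivalence classes: it is independent of the choice of representatives under (V_m^ε, V_n) ≈ (V_{q−1−m}^{ε+1}, V_{p−2−n}). -/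
/-- The Kac–Wakimoto identification `(m, ε, n) ↦ (q-1-m, ε+1, p-2-n)` on symbols
`(V_m^ε, V_n)`, `0 ≤ m ≤ q-1`, `0 ≤ n ≤ p-2`, written with `Fin.rev`. -/
def kwInvol (p q : ℕ) (x : Fin q × ZMod 2 × Fin (p - 1)) :
    Fin q × ZMod 2 × Fin (p - 1) :=
  (x.1.rev, x.2.1 + 1, x.2.2.rev)

/-- The relation whose quotient is the set of equivalence classes
`(V_m^ε, V_n)~`. -/
def kwRel (p q : ℕ) (x y : Fin q × ZMod 2 × Fin (p - 1)) : Prop :=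
  y = kwInvol p q x

/-- The rational-level fusion product of two representative symbols, as an
element of the free ℤ-module on the set of equivalence classes:
`(V_{r₁}^α, V_{s₁}) ∘ (V_{r₂}^β, V_{s₂}) =
  Σ_{j=|r₁-r₂|}^{min(2q-2-r₁-r₂, r₁+r₂)}
    (V_j^{α+β+r₁+r₂-j}, V_{s₁} ⊗̇_{p-2} V_{s₂})~`,
where `V_{s₁} ⊗̇_{p-2} V_{s₂} = ⊕_{l=|s₁-s₂|, step 2}^{min(2(p-2)-s₁-s₂, s₁+s₂)} V_l`. -/
noncomputable def kwFus (p q : ℕ) (a b : Fin q × ZMod 2 × Fin (p - 1)) :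
    Quot (kwRel p q) →₀ ℤ :=
  ∑ j : Fin q, ∑ l : Fin (p - 1),
    if ((a.1 : ℕ) - (b.1 : ℕ)) ⊔ ((b.1 : ℕ) - (a.1 : ℕ)) ≤ (j : ℕ) ∧
        (j : ℕ) ≤ min (2 * q - 2 - (a.1 : ℕ) - (b.1 : ℕ)) ((a.1 : ℕ) + (b.1 : ℕ)) ∧
        ((a.2.2 : ℕ) - (b.2.2 : ℕ)) ⊔ ((b.2.2 : ℕ) - (a.2.2 : ℕ)) ≤ (l : ℕ) ∧
        (l : ℕ) ≤ min (2 * (p - 2) - (a.2.2 : ℕ) - (b.2.2 : ℕ)) ((a.2.2 : ℕ) + (b.2.2 : ℕ)) ∧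
        ((a.2.2 : ℕ) + (b.2.2 : ℕ) + (l : ℕ)) % 2 = 0
    then Finsupp.single
      (Quot.mk (kwRel p q)
        (j, a.2.1 + b.2.1 + (((a.1 : ℕ) + (b.1 : ℕ) - (j : ℕ) : ℕ) : ZMod 2), l)) 1
    else 0

/-!
Reflecting the summation indices, `j ↦ q-1-j` and `l ↦ p-2-l`, maps the fusion range of
`(q-1-r₁, r₂)` onto that of `(r₁, r₂)` at level `q-1`, and likewise at level `p-2`, where the
parity condition `s₁ + s₂ + l ≡ 0` is preserved. After this reindexing each summand of
`(V_{r₁}^α, V_{s₁})~ ∘ (V_{r₂}^β, V_{s₂})~` with the first factor replaced is the image under the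
involution of the corresponding original summand: the `ℤ/2` labels differ by exactly `1`.
Since the product is symmetric, the second factor is handled by the first.
-/

/-- `V_j` occurs in `V_{r₁} ⊗̇_k V_{r₂}`, up to the parity condition `r₁ + r₂ + j` even. -/
def InFusionRange (k r₁ r₂ j : ℕ) : Prop :=
  (r₁ - r₂) ⊔ (r₂ - r₁) ≤ j ∧ j ≤ min (2 * k - r₁ - r₂) (r₁ + r₂)

namespace InFusionRange

instance (k r₁ r₂ j : ℕ) : Decidable (InFusionRange k r₁ r₂ j) :=
  inferInstanceAs (Decidable (_ ∧ _))

variable {k r₁ r₂ j : ℕ}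

theorem comm : InFusionRange k r₁ r₂ j ↔ InFusionRange k r₂ r₁ j := by
  unfold InFusionRange
  omega

theorem sub_left_iff (h₁ : r₁ ≤ k) (hj : j ≤ k) :
    InFusionRange k (k - r₁) r₂ j ↔ InFusionRange k r₁ r₂ (k - j) := by
  unfold InFusionRange
  omega

end InFusionRange

noncomputable def kwFusTerm (p q : ℕ) (a b : Fin q × ZMod 2 × Fin (p - 1)) (j : Fin q)
    (l : Fin (p - 1)) : Quot (kwRel p q) →₀ ℤ :=
  if InFusionRange (q - 1) a.1 b.1 j ∧ InFusionRange (p - 2) a.2.2 b.2.2 l ∧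
      ((a.2.2 : ℕ) + b.2.2 + l) % 2 = 0
  then Finsupp.single
    (Quot.mk (kwRel p q) (j, a.2.1 + b.2.1 + (((a.1 : ℕ) + b.1 - j : ℕ) : ZMod 2), l)) 1
  else 0

section KacWakimoto

variable {p q : ℕ}

theorem quot_mk_kwInvol (x : Fin q × ZMod 2 × Fin (p - 1)) :
    Quot.mk (kwRel p q) (kwInvol p q x) = Quot.mk (kwRel p q) x :=
  (Quot.sound (r := kwRel p q) rfl).symm

theorem kwFus_eq_sum_kwFusTerm (a b : Fin q × ZMod 2 × Fin (p - 1)) :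
    kwFus p q a b = ∑ j, ∑ l, kwFusTerm p q a b j l := by
  simp only [kwFus, kwFusTerm, InFusionRange, and_assoc, show 2 * (q - 1) = 2 * q - 2 by omega]

theorem kwFusTerm_comm (a b : Fin q × ZMod 2 × Fin (p - 1)) (j : Fin q) (l : Fin (p - 1)) :
    kwFusTerm p q a b j l = kwFusTerm p q b a j l := by
  unfold kwFusTerm
  simp only [InFusionRange.comm (r₁ := a.1), InFusionRange.comm (r₁ := a.2.2), add_comm a.2.1,
    add_comm (a.1 : ℕ), add_comm (a.2.2 : ℕ)]

theorem kwFus_comm (a b : Fin q × ZMod 2 × Fin (p - 1)) : kwFus p q a b = kwFus p q b a := by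
  simp only [kwFus_eq_sum_kwFusTerm, kwFusTerm_comm a b]

theorem kwFusTerm_kwInvol_left (a b : Fin q × ZMod 2 × Fin (p - 1)) (j : Fin q)
    (l : Fin (p - 1)) :
    kwFusTerm p q (kwInvol p q a) b j l = kwFusTerm p q a b j.rev l.rev := by
  obtain ⟨r₁, α, s₁⟩ := a
  obtain ⟨r₂, β, s₂⟩ := b
  have rev_q (i : Fin q) : (i.rev : ℕ) = q - 1 - i := by rw [Fin.val_rev]; omega
  have rev_p (i : Fin (p - 1)) : (i.rev : ℕ) = p - 2 - i := by rw [Fin.val_rev]; omega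
  have hr₁ : (r₁ : ℕ) ≤ q - 1 := by omega
  have hj : (j : ℕ) ≤ q - 1 := by omega
  have hs₁ : (s₁ : ℕ) ≤ p - 2 := by omega
  have hl : (l : ℕ) ≤ p - 2 := by omega
  unfold kwFusTerm kwInvol
  simp only [rev_q, rev_p, InFusionRange.sub_left_iff hr₁ hj, InFusionRange.sub_left_iff hs₁ hl]
  have hparity : (p - 2 - s₁ + s₂ + l) % 2 = (s₁ + s₂ + (p - 2 - l)) % 2 := by omega
  rw [hparity]
  split_ifs with hcond
  · obtain ⟨⟨hlow, hhigh⟩, -⟩ := hcond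
    -- On the fusion range neither subtraction truncates; they differ by `2 (q - 1 - r₁ - j)`.
    have hlabel : ((q - 1 - r₁ + r₂ - j : ℕ) : ZMod 2) = ((r₁ + r₂ - (q - 1 - j) : ℕ) : ZMod 2) := by
      rw [ZMod.natCast_eq_natCast_iff']
      omega
    refine congrArg (Finsupp.single · 1) (Eq.trans ?_ (quot_mk_kwInvol _))
    simp only [kwInvol, Fin.rev_rev, hlabel]
    ring_nf
  · rfl

theorem kwFus_kwInvol_left (a b : Fin q × ZMod 2 × Fin (p - 1)) :
    kwFus p q (kwInvol p q a) b = kwFus p q a b := by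
  simp only [kwFus_eq_sum_kwFusTerm, kwFusTerm_kwInvol_left]
  exact Fintype.sum_equiv Fin.revPerm _ _ fun j =>
    Fintype.sum_equiv Fin.revPerm _ _ fun l => rfl

theorem kwFus_kwInvol_right (a b : Fin q × ZMod 2 × Fin (p - 1)) :
    kwFus p q a (kwInvol p q b) = kwFus p q a b := by
  rw [kwFus_comm, kwFus_kwInvol_left, kwFus_comm]

end KacWakimoto

theorem stmt18_general (p q : ℕ) :
    ∀ a b : Fin q × ZMod 2 × Fin (p - 1),
      kwFus p q (kwInvol p q a) b = kwFus p q a b ∧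
      kwFus p q a (kwInvol p q b) = kwFus p q a b :=
  fun a b => ⟨kwFus_kwInvol_left a b, kwFus_kwInvol_right a b⟩

/-- **The rational-level fusion product is well defined on equivalence
classes:** replacing either representative by its image under the involution
`(V_m^ε, V_n) ≈ (V_{q-1-m}^{ε+1}, V_{p-2-n})` does not change the product. -/
theorem stmt18 (p q : ℕ) (hp : 2 ≤ p) (hq : 0 < q) (hco : Nat.Coprime p q) :
    ∀ a b : Fin q × ZMod 2 × Fin (p - 1),
      kwFus p q (kwInvol p q a) b = kwFus p q a b ∧
      kwFus p q a (kwInvol p q b) = kwFus p q a b :=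
  stmt18_general p q
end
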